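/- arXiv:1603.02639 — 3 statements merged into one kernel-verified Lean document; each statement's English description precedes it below -/
import Mathlib

section
/- Consider the 6-dimensional Carnot group of step 3 on ℝ⁶ with coordinates (x, y, z, z₁, z₂, z₃), whose horizontal layer is spanned by the left-invariant vector fields X = ∂_x, Y = ∂_y, Z = ∂_z + x∂_{z₁} + y∂_{z₂} + y²∂_{z₃}. The straight curve γ(t) = exp(tZ), t ∈ [0,1], is not pliable: there exists a C¹ neighborhood of γ such that every horizontal curve β in this neighborhood starting from 0 has nondecreasing z₃-coordinate; in particular no such β ends at a point with negative z₃-coordinate. -/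
open Filter Topology Set

/-- In the 6-dimensional step-3 Carnot group on `ℝ⁶` with horizontal frame
`X = ∂ₓ`, `Y = ∂_y`, `Z = ∂_z + x∂_{z₁} + y∂_{z₂} + y²∂_{z₃}`, the straight curve
`γ(t) = exp(tZ)` is not pliable: there is a `C¹` neighborhood of `γ` (expressed by the
velocity coefficients `(aβ, bβ, cβ)` being uniformly `ε`-close to `(0,0,1)`) such that every
horizontal curve `β = (x,y,z,z₁,z₂,z₃)` in this neighborhood starting from the origin has
nondecreasing `z₃`-coordinate; in particular no such curve ends at a point with negative
`z₃`-coordinate. -/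
theorem engel_type_curve_not_pliable :
    ∃ ε > 0, ∀ x y z z₁ z₂ z₃ aβ bβ cβ : ℝ → ℝ,
      Continuous aβ → Continuous bβ → Continuous cβ →
      -- β is horizontal: β'(t) = aβ(t)·X(β(t)) + bβ(t)·Y(β(t)) + cβ(t)·Z(β(t)) on [0,1]
      (∀ t ∈ Icc (0:ℝ) 1, HasDerivAt x (aβ t) t) →
      (∀ t ∈ Icc (0:ℝ) 1, HasDerivAt y (bβ t) t) →
      (∀ t ∈ Icc (0:ℝ) 1, HasDerivAt z (cβ t) t) →
      (∀ t ∈ Icc (0:ℝ) 1, HasDerivAt z₁ (cβ t * x t) t) →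
      (∀ t ∈ Icc (0:ℝ) 1, HasDerivAt z₂ (cβ t * y t) t) →
      (∀ t ∈ Icc (0:ℝ) 1, HasDerivAt z₃ (cβ t * (y t) ^ 2) t) →
      -- β starts from the origin
      x 0 = 0 → y 0 = 0 → z 0 = 0 → z₁ 0 = 0 → z₂ 0 = 0 → z₃ 0 = 0 →
      -- β is in the C¹ ε-neighborhood of γ(t) = exp(tZ): velocities are ε-close to (0,0,1)
      (∀ t ∈ Icc (0:ℝ) 1, |aβ t| < ε ∧ |bβ t| < ε ∧ |cβ t - 1| < ε) →
      MonotoneOn z₃ (Icc (0:ℝ) 1) ∧ (∀ t ∈ Icc (0:ℝ) 1, 0 ≤ z₃ t) ∧ ¬ z₃ 1 < 0 := by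
  refine ⟨1/2, by norm_num, ?_⟩
  intro x y z z₁ z₂ z₃ aβ bβ cβ _ _ _ _ _ _ _ _ hz₃ _ _ _ _ _ hz₃0 hclose
  have hmono : MonotoneOn z₃ (Icc (0:ℝ) 1) := by
    apply monotoneOn_of_deriv_nonneg (convex_Icc 0 1)
    · intro t ht
      exact ((hz₃ t ht).continuousAt).continuousWithinAt
    · intro t ht
      rw [interior_Icc] at ht
      exact ((hz₃ t (Ioo_subset_Icc_self ht)).differentiableAt).differentiableWithinAt
    · intro t ht
      rw [interior_Icc] at ht
      have ht' := Ioo_subset_Icc_self ht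
      rw [(hz₃ t ht').deriv]
      have hc := (hclose t ht').2.2
      have : (1:ℝ)/2 < cβ t := by
        have := abs_lt.mp hc
        linarith [this.1]
      positivity
  have hnn : ∀ t ∈ Icc (0:ℝ) 1, 0 ≤ z₃ t := by
    intro t ht
    have := hmono (left_mem_Icc.mpr (by norm_num)) ht ht.1
    rw [hz₃0] at this
    exact this
  exact ⟨hmono, hnn, not_lt.mpr (hnn 1 (right_mem_Icc.mpr (by norm_num)))⟩
end

section
/- Fix s ≥ 1. Let 𝒜 be the free nilpotent stratified Lie algebra of step s on generators Z₁,…,Z_s, let I_i be the ideal generated by Z_i, J_i = [I_i, I_i], and J = Σᵢ J_i. Then J is an ideal of 𝒜, the quotient 𝔊 = 𝒜/J is a stratified nilpotent Lie algebra, and denoting by X₁,…,X_s the images of Z₁,…,Z_s: (a) every iterated bracket of X₁,…,X_s in which some X_i appears at least twice is zero; (b) 𝔊 has step exactly s, since [X₁,[X₂,[⋯,X_s]⋯] ≠ 0. -/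
/-!
Part (a): if `Zᵢ` occurs twice in an iterated bracket, some sub-bracket `[u, v]` has `Zᵢ`
occurring in both `u` and `v`, so it lies in `[Iᵢ, Iᵢ] = Jᵢ`, and then so does the whole bracket
since `Jᵢ` is an ideal. Part (b) uses a representation: sending `Zᵢ` to the elementary matrix
`E_{i,i+1}` of size `s + 1` defines a homomorphism on `𝒜` (the strictly upper triangular
matrices of size `s + 1` have lower central series vanishing at step `s`) that kills `J`, because
it maps `Iᵢ` into the matrices supported in rows `≤ i` and columns `> i`, an abelian ideal of the
strictly upper triangular matrices. The left-nested bracket of the `E_{i,i+1}` is `E_{0,s} ≠ 0`.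
-/

/-- Formal bracket words in `s` generators. -/
inductive BW (s : ℕ) : Type
  | leaf : Fin s → BW s
  | node : BW s → BW s → BW s

/-- Number of occurrences of the generator `i` in a bracket word. -/
def BW.count {s : ℕ} (i : Fin s) : BW s → ℕ
  | .leaf j => if i = j then 1 else 0
  | .node a b => a.count i + b.count i

/-- Evaluation of a bracket word on elements `X i` of a Lie ring. -/
def BW.eval {s : ℕ} {L : Type*} [LieRing L] (X : Fin s → L) : BW s → L
  | .leaf j => X j
  | .node a b => ⁅a.eval X, b.eval X⁆

/-- The left-nested bracket `[a₁,[a₂,[⋯,a_n]⋯]`. -/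
def leftNested {L : Type*} [LieRing L] : List L → L
  | [] => 0
  | [a] => a
  | a :: rest => ⁅a, leftNested rest⁆

/-- The free nilpotent stratified Lie algebra `𝒜` of step `s` on `s` generators,
realized as the quotient of the free Lie algebra on `Fin s` by the `s`-th term of its
lower central series (the ideal of brackets of length `> s`). -/
noncomputable abbrev Acal (s : ℕ) :=
  FreeLieAlgebra ℝ (Fin s) ⧸
    LieModule.lowerCentralSeries ℝ (FreeLieAlgebra ℝ (Fin s)) (FreeLieAlgebra ℝ (Fin s)) s

/-- The generators `Z₁,…,Z_s` of `𝒜`. -/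
noncomputable abbrev Zgen (s : ℕ) (i : Fin s) : Acal s :=
  LieSubmodule.Quotient.mk'
    (LieModule.lowerCentralSeries ℝ (FreeLieAlgebra ℝ (Fin s)) (FreeLieAlgebra ℝ (Fin s)) s)
    (FreeLieAlgebra.of ℝ i)

/-- `I_i`, the ideal of `𝒜` generated by `Z_i`. -/
noncomputable abbrev Ii (s : ℕ) (i : Fin s) : LieIdeal ℝ (Acal s) :=
  LieSubmodule.lieSpan ℝ (Acal s) {Zgen s i}

/-- `J_i = ⁅I_i, I_i⁆`. -/
noncomputable abbrev Ji (s : ℕ) (i : Fin s) : LieIdeal ℝ (Acal s) := ⁅Ii s i, Ii s i⁆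

/-- `J = Σᵢ J_i`; it is an ideal of `𝒜` (by construction, as a `LieIdeal`). -/
noncomputable abbrev Jtot (s : ℕ) : LieIdeal ℝ (Acal s) := ⨆ i, Ji s i

/-- The quotient (nilpotent, stratified) Lie algebra `𝔊 = 𝒜 / J`. -/
noncomputable abbrev Gquot (s : ℕ) := Acal s ⧸ Jtot s

/-- The images `X₁,…,X_s` of the generators `Z₁,…,Z_s` in `𝔊`. -/
noncomputable abbrev Xgen (s : ℕ) (i : Fin s) : Gquot s :=
  LieSubmodule.Quotient.mk' (Jtot s) (Zgen s i)

section LieQuotient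

variable {R L L' : Type*} [CommRing R] [LieRing L] [LieAlgebra R L] [LieRing L']
  [LieAlgebra R L']

namespace LieIdeal

def quotientMk (I : LieIdeal R L) : L →ₗ⁅R⁆ L ⧸ I where
  toLinearMap := (LieSubmodule.Quotient.mk' I : L →ₗ[R] L ⧸ I)
  map_lie' := rfl

def quotientLift (I : LieIdeal R L) (f : L →ₗ⁅R⁆ L') (h : I ≤ f.ker) : L ⧸ I →ₗ⁅R⁆ L' where
  toLinearMap := (I : Submodule R L).liftQ f fun x hx => f.mem_ker.1 (h hx)
  map_lie' := by
    rintro ⟨x⟩ ⟨y⟩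
    exact f.map_lie x y

theorem lowerCentralSeries_quotient_eq_bot {I : LieIdeal R L} {k : ℕ}
    (h : LieModule.lowerCentralSeries R L L k ≤ I) :
    LieModule.lowerCentralSeries R (L ⧸ I) (L ⧸ I) k = ⊥ := by
  rw [← LieSubmodule.toSubmodule_inj, ← coe_lowerCentralSeries_ideal_quot_eq,
    ← LieModule.map_lowerCentralSeries_eq k (LieSubmodule.Quotient.surjective_mk' I),
    (LieSubmodule.Quotient.map_mk'_eq_bot_le _ _).2 h]
  rfl

end LieIdeal

theorem leftNested_cons (a : L) {l : List L} (hl : l ≠ []) :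
    leftNested (a :: l) = ⁅a, leftNested l⁆ := by
  obtain ⟨b, l, rfl⟩ := List.exists_cons_of_ne_nil hl
  rfl

theorem leftNested_map (f : L →ₗ⁅R⁆ L') :
    ∀ l : List L, f (leftNested l) = leftNested (l.map f)
  | [] => map_zero f
  | [_] => rfl
  | a :: b :: l => by
    rw [leftNested_cons a (List.cons_ne_nil b l), f.map_lie, leftNested_map f (b :: l)]
    rfl

theorem BW.eval_map {s : ℕ} (f : L →ₗ⁅R⁆ L') (X : Fin s → L) :
    ∀ w : BW s, w.eval (f ∘ X) = f (w.eval X)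
  | .leaf _ => rfl
  | .node a b => by rw [BW.eval, BW.eval, a.eval_map f X, b.eval_map f X, f.map_lie]

theorem BW.eval_mem_of_count_pos {s : ℕ} {X : Fin s → L} {i : Fin s} {I : LieIdeal R L}
    (hX : X i ∈ I) : ∀ w : BW s, 0 < w.count i → w.eval X ∈ I
  | .leaf j, h => by
    obtain rfl : i = j := by by_contra hij; simp [BW.count, hij] at h
    exact hX
  | .node a b, h => by
    rw [BW.count] at h
    rw [BW.eval]
    rcases Nat.eq_zero_or_pos (b.count i) with hb | hb
    · rw [← lie_skew]
      exact neg_mem (I.lie_mem (a.eval_mem_of_count_pos hX (by omega)))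
    · exact I.lie_mem (b.eval_mem_of_count_pos hX hb)

theorem BW.eval_mem_lie_of_two_le_count {s : ℕ} {X : Fin s → L} {i : Fin s}
    {I : LieIdeal R L} (hX : X i ∈ I) : ∀ w : BW s, 2 ≤ w.count i → w.eval X ∈ ⁅I, I⁆
  | .leaf j, h => by unfold BW.count at h; split at h <;> omega
  | .node a b, h => by
    rw [BW.count] at h
    rw [BW.eval]
    rcases Nat.eq_zero_or_pos (a.count i) with ha | ha
    · exact ⁅I, I⁆.lie_mem (b.eval_mem_lie_of_two_le_count hX (by omega))
    rcases Nat.eq_zero_or_pos (b.count i) with hb | hb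
    · rw [← lie_skew]
      exact neg_mem (⁅I, I⁆.lie_mem (a.eval_mem_lie_of_two_le_count hX (by omega)))
    · exact LieSubmodule.lie_mem_lie (a.eval_mem_of_count_pos hX ha)
        (b.eval_mem_of_count_pos hX hb)

end LieQuotient

attribute [local instance] LieRing.ofAssociativeRing

namespace Matrix

section SupportedOn

variable {n R : Type*}

def supportedOn (R : Type*) [Semiring R] (P : n → n → Prop) : Submodule R (Matrix n n R) where
  carrier := {A | ∀ i j, ¬P i j → A i j = 0}
  add_mem' hA hB i j h := by simp [hA i j h, hB i j h]
  zero_mem' _ _ _ := rfl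
  smul_mem' c _ hA i j h := by simp [hA i j h]

theorem supportedOn_mono [Semiring R] {P Q : n → n → Prop} (h : P ≤ Q) :
    supportedOn R P ≤ supportedOn R Q :=
  fun _ hA i j hQ => hA i j fun hP => hQ (h i j hP)

theorem eq_zero_of_mem_supportedOn [Semiring R] {P : n → n → Prop} (hP : ∀ i j, ¬P i j)
    {A : Matrix n n R} (hA : A ∈ supportedOn R P) : A = 0 :=
  ext fun i j => hA i j (hP i j)

theorem single_mem_supportedOn [Semiring R] [DecidableEq n] {P : n → n → Prop} {i j : n}
    (h : P i j) (c : R) : single i j c ∈ supportedOn R P := by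
  intro a b hab
  apply single_apply_of_ne
  rintro ⟨rfl, rfl⟩
  exact hab h

theorem mul_mem_supportedOn [Fintype n] [Semiring R] {P Q : n → n → Prop} {A B : Matrix n n R}
    (hA : A ∈ supportedOn R P) (hB : B ∈ supportedOn R Q) :
    A * B ∈ supportedOn R (Relation.Comp P Q) := by
  intro i k hik
  rw [mul_apply]
  refine Finset.sum_eq_zero fun j _ => ?_
  by_cases hij : P i j
  · rw [hB j k fun hjk => hik ⟨j, hij, hjk⟩, mul_zero]
  · rw [hA i j hij, zero_mul]

theorem lie_mem_supportedOn [Fintype n] [DecidableEq n] [Ring R] {P Q T : n → n → Prop}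
    (hPQ : Relation.Comp P Q ≤ T) (hQP : Relation.Comp Q P ≤ T) {A B : Matrix n n R}
    (hA : A ∈ supportedOn R P) (hB : B ∈ supportedOn R Q) : ⁅A, B⁆ ∈ supportedOn R T := by
  rw [Ring.lie_def]
  exact sub_mem (supportedOn_mono hPQ (mul_mem_supportedOn hA hB))
    (supportedOn_mono hQP (mul_mem_supportedOn hB hA))

end SupportedOn

theorem leftNested_single_path {n R : Type*} [Fintype n] [DecidableEq n] [Ring R] :
    ∀ (m : ℕ) (f : Fin (m + 2) → n), Function.Injective f →
      leftNested (List.ofFn fun j : Fin (m + 1) => single (f j.castSucc) (f j.succ) (1 : R)) =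
        single (f 0) (f (Fin.last _)) 1
  | 0, _, _ => rfl
  | m + 1, f, hf => by
    have htail :=
      leftNested_single_path (R := R) m (f ∘ Fin.succ) (hf.comp (Fin.succ_injective _))
    simp only [Function.comp_apply, Fin.succ_castSucc] at htail
    rw [List.ofFn_succ, leftNested_cons _ (mt List.ofFn_eq_nil_iff.1 m.succ_ne_zero), htail,
      Ring.lie_def, single_mul_single_same, one_mul]
    simp [hf.eq_iff]

def supportedOnLieSubalgebra {n : Type*} [Fintype n] [DecidableEq n] (R : Type*)
    [CommRing R] (P : n → n → Prop) (hP : Relation.Comp P P ≤ P) : LieSubalgebra R (Matrix n n R) :=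
  { supportedOn R P with
    lie_mem' := lie_mem_supportedOn hP hP }

end Matrix

open Matrix

section MatrixRepresentations

variable {R L : Type*} [CommRing R] [LieRing L] [LieAlgebra R L]

theorem LieHom.apply_mem_supportedOn_of_mem_lieSpan {n : Type*} [Fintype n] [DecidableEq n]
    (f : L →ₗ⁅R⁆ Matrix n n R) {P Q : n → n → Prop} (hf : ∀ x, f x ∈ supportedOn R P)
    (hPQ : Relation.Comp P Q ≤ Q) (hQP : Relation.Comp Q P ≤ Q) {S : Set L}
    (hS : ∀ z ∈ S, f z ∈ supportedOn R Q) {x : L} (hx : x ∈ LieSubmodule.lieSpan R L S) :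
    f x ∈ supportedOn R Q := by
  induction hx using LieSubmodule.lieSpan_induction with
  | mem z hz => exact hS z hz
  | zero => rw [map_zero]; exact zero_mem _
  | add y z _ _ hy hz => rw [map_add]; exact add_mem hy hz
  | smul c y _ hy => rw [map_smul]; exact Submodule.smul_mem _ c hy
  | lie y z _ hz => rw [f.map_lie]; exact lie_mem_supportedOn hPQ hQP (hf y) hz

theorem LieHom.apply_mem_supportedOn_of_mem_lowerCentralSeries {n : ℕ}
    (f : L →ₗ⁅R⁆ Matrix (Fin n) (Fin n) R)
    (hf : ∀ x, f x ∈ supportedOn R fun a b : Fin n => (a : ℕ) + 1 ≤ b) (k : ℕ) {x : L}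
    (hx : x ∈ LieModule.lowerCentralSeries R L L k) :
    f x ∈ supportedOn R fun a b : Fin n => (a : ℕ) + (k + 1) ≤ b := by
  induction k generalizing x with
  | zero => exact hf x
  | succ k ih =>
    suffices (LieModule.lowerCentralSeries R L L (k + 1)).toSubmodule ≤
        (supportedOn R fun a b : Fin n => (a : ℕ) + (k + 2) ≤ b).comap (f : L →ₗ[R] _) from
      this hx
    rw [LieModule.lowerCentralSeries_succ, LieSubmodule.lieIdeal_oper_eq_linear_span',
      Submodule.span_le]
    rintro _ ⟨y, -, z, hz, rfl⟩
    rw [SetLike.mem_coe, Submodule.mem_comap, LieHom.coe_toLinearMap, f.map_lie]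
    exact lie_mem_supportedOn (fun _ _ ⟨_, hab, hbc⟩ => by omega)
      (fun _ _ ⟨_, hab, hbc⟩ => by omega) (hf y) (ih hz)

end MatrixRepresentations

section TestRepresentation

variable (s : ℕ)

abbrev strictlyUpper : LieSubalgebra ℝ (Matrix (Fin (s + 1)) (Fin (s + 1)) ℝ) :=
  supportedOnLieSubalgebra ℝ (fun a b : Fin (s + 1) => (a : ℕ) + 1 ≤ b)
    fun _ _ ⟨_, hab, hbc⟩ => by omega

def superdiagonalUnit (i : Fin s) : strictlyUpper s :=
  ⟨single i.castSucc i.succ 1, single_mem_supportedOn (by simp) 1⟩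

noncomputable def freeToMatrix :
    FreeLieAlgebra ℝ (Fin s) →ₗ⁅ℝ⁆ Matrix (Fin (s + 1)) (Fin (s + 1)) ℝ :=
  (strictlyUpper s).incl.comp (FreeLieAlgebra.lift ℝ (superdiagonalUnit s))

theorem lowerCentralSeries_le_ker_freeToMatrix :
    LieModule.lowerCentralSeries ℝ (FreeLieAlgebra ℝ (Fin s)) (FreeLieAlgebra ℝ (Fin s)) s ≤
      (freeToMatrix s).ker := fun x hx =>
  (freeToMatrix s).mem_ker.2 <| eq_zero_of_mem_supportedOn (fun a b h => by omega) <|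
    (freeToMatrix s).apply_mem_supportedOn_of_mem_lowerCentralSeries
      (fun y => (FreeLieAlgebra.lift ℝ (superdiagonalUnit s) y).2) s hx

noncomputable def acalToMatrix : Acal s →ₗ⁅ℝ⁆ Matrix (Fin (s + 1)) (Fin (s + 1)) ℝ :=
  LieIdeal.quotientLift _ (freeToMatrix s) (lowerCentralSeries_le_ker_freeToMatrix s)

theorem acalToMatrix_mem_strictlyUpper (x : Acal s) : acalToMatrix s x ∈ strictlyUpper s := by
  obtain ⟨y, rfl⟩ := LieSubmodule.Quotient.surjective_mk' _ x
  exact (FreeLieAlgebra.lift ℝ (superdiagonalUnit s) y).2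

theorem acalToMatrix_Zgen (i : Fin s) :
    acalToMatrix s (Zgen s i) = single i.castSucc i.succ 1 :=
  congrArg Subtype.val (FreeLieAlgebra.lift_of_apply _ i)

theorem acalToMatrix_mem_of_mem_Ii {i : Fin s} {x : Acal s} (hx : x ∈ Ii s i) :
    acalToMatrix s x ∈ supportedOn ℝ fun a b : Fin (s + 1) => (a : ℕ) ≤ i ∧ (i : ℕ) < b := by
  refine (acalToMatrix s).apply_mem_supportedOn_of_mem_lieSpan
    (acalToMatrix_mem_strictlyUpper s) (fun _ _ ⟨_, hab, hbc⟩ => by omega)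
    (fun _ _ ⟨_, hab, hbc⟩ => by omega) ?_ hx
  rintro _ rfl
  rw [acalToMatrix_Zgen]
  exact single_mem_supportedOn (by simp) 1

theorem Jtot_le_ker_acalToMatrix : Jtot s ≤ (acalToMatrix s).ker :=
  iSup_le fun i => (LieSubmodule.lie_le_iff _ _ _).2 fun x hx y hy => by
    rw [LieHom.mem_ker, LieHom.map_lie]
    exact eq_zero_of_mem_supportedOn (fun a b h => by omega) <|
      lie_mem_supportedOn (fun _ _ ⟨_, hab, hbc⟩ => by omega)
        (fun _ _ ⟨_, hab, hbc⟩ => by omega) (acalToMatrix_mem_of_mem_Ii s hx)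
        (acalToMatrix_mem_of_mem_Ii s hy)

noncomputable def gquotToMatrix : Gquot s →ₗ⁅ℝ⁆ Matrix (Fin (s + 1)) (Fin (s + 1)) ℝ :=
  LieIdeal.quotientLift _ (acalToMatrix s) (Jtot_le_ker_acalToMatrix s)

end TestRepresentation

theorem leftNested_Xgen_ne_zero {s : ℕ} (hs : 1 ≤ s) : leftNested (List.ofFn (Xgen s)) ≠ 0 := by
  obtain ⟨m, rfl⟩ := Nat.exists_eq_add_of_le' hs
  intro h
  have h' := congrArg (gquotToMatrix (m + 1)) h
  have hX : gquotToMatrix (m + 1) ∘ Xgen (m + 1) =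
      fun j => single (id j.castSucc) (id j.succ) 1 :=
    funext (acalToMatrix_Zgen (m + 1))
  rw [leftNested_map, List.map_ofFn, hX, leftNested_single_path m id Function.injective_id,
    map_zero] at h'
  simpa using congrFun (congrFun h' 0) (Fin.last _)

theorem BW.eval_Xgen_eq_zero {s : ℕ} (w : BW s) (hw : ∃ i, 2 ≤ w.count i) :
    w.eval (Xgen s) = 0 := by
  obtain ⟨i, hi⟩ := hw
  have hZ : Zgen s i ∈ Ii s i := LieSubmodule.subset_lieSpan (Set.mem_singleton _)
  have hmem : w.eval (Zgen s) ∈ Jtot s :=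
    LieSubmodule.mem_iSup_of_mem (N := Ji s) i (w.eval_mem_lie_of_two_le_count hZ hi)
  calc w.eval (Xgen s) = (Jtot s).quotientMk (w.eval (Zgen s)) :=
      w.eval_map (Jtot s).quotientMk (Zgen s)
    _ = 0 := (LieSubmodule.Quotient.mk_eq_zero _).2 hmem

/-- **Construction of pliable Carnot algebras of arbitrary step.** Fix `s ≥ 1`. In the
quotient `𝔊 = 𝒜 / J` of the free nilpotent stratified Lie algebra of step `s` on `s`
generators by the ideal `J = Σᵢ ⁅I_i, I_i⁆`: (a) every iterated bracket of the images
`X₁,…,X_s` of the generators in which some `X_i` appears at least twice vanishes; (b)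
`𝔊` is nilpotent of step exactly `s`, since the left-nested bracket
`[X₁,[X₂,[⋯,X_s]⋯]` does not vanish while the `s`-th term of the lower central series
of `𝔊` vanishes. -/
theorem free_quotient_step_s
    (s : ℕ) (hs : 1 ≤ s) :
    (∀ w : BW s, (∃ i : Fin s, 2 ≤ w.count i) → w.eval (Xgen s) = 0) ∧
    leftNested (List.ofFn (Xgen s)) ≠ 0 ∧
    LieModule.lowerCentralSeries ℝ (Gquot s) (Gquot s) s = ⊥ := by
  have hAcal : LieModule.lowerCentralSeries ℝ (Acal s) (Acal s) s = ⊥ :=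
    LieIdeal.lowerCentralSeries_quotient_eq_bot le_rfl
  exact ⟨BW.eval_Xgen_eq_zero, leftNested_Xgen_ne_zero hs,
    LieIdeal.lowerCentralSeries_quotient_eq_bot (hAcal ▸ bot_le)⟩
end

section
/- Let G₂ be a Carnot group such that the pair (ℝ, G₂) has the C¹_H extension property, and let G₂′ be another Carnot group such that (ℝ, G₂′) has the C¹_H extension property. Then the product Carnot group G₂ × G₂′ is such that (ℝ, G₂ × G₂′) has the C¹_H extension property. -/
open Filter Topology Set Metric

section

variable (G : Type*) [Group G] [MetricSpace G]
variable (H : Type*) [NormedAddCommGroup H] [NormedSpace ℝ H]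

/-- `γ` is a curve of class `C¹_H` on `s` with (horizontal) velocity `γ'`. -/
def IsC1H (expMap : H → G) (γ : ℝ → G) (γ' : ℝ → H) (s : Set ℝ) : Prop :=
  ContinuousOn γ s ∧ ContinuousOn γ' s ∧
    ∀ t ∈ s, Tendsto (fun u => dist (γ u) (γ t * expMap ((u - t) • γ' t)) / |u - t|)
      (𝓝[s \ {t}] t) (𝓝 0)

/-- The `C¹_H`-Whitney condition for `(f, X)` on a closed set `K ⊆ ℝ`: `X` is continuous
on `K` and on every compact subset the first-order Taylor remainder is `o(|t-τ|)`. -/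
def WhitneyCond (expMap : H → G) (f : ℝ → G) (X : ℝ → H) (K : Set ℝ) : Prop :=
  ContinuousOn X K ∧
    ∀ K' ⊆ K, IsCompact K' →
      ∃ ω : ℝ → ℝ, Tendsto (fun h => ω h / h) (𝓝[>] (0:ℝ)) (𝓝 0) ∧
        ∀ t ∈ K', ∀ τ ∈ K', dist (f t) (f τ * expMap ((t - τ) • X τ)) ≤ ω |t - τ|

/-- The pair `(ℝ, G)` has the `C¹_H` extension property: every pair `(f, X)` satisfying
the `C¹_H`-Whitney condition on a closed set `K₀ ⊆ ℝ` extends to a globally defined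
horizontal `C¹` curve with the prescribed derivative on `K₀`. -/
def ExtensionProperty (expMap : H → G) : Prop :=
  ∀ K₀ : Set ℝ, IsClosed K₀ → ∀ (f : ℝ → G) (X : ℝ → H),
    WhitneyCond G H expMap f X K₀ →
      ∃ (fbar : ℝ → G) (Xbar : ℝ → H),
        IsC1H G H expMap fbar Xbar univ ∧ EqOn fbar f K₀ ∧ EqOn Xbar X K₀

end

section

variable {G : Type*} [Group G] [MetricSpace G] {H : Type*} [NormedAddCommGroup H] [NormedSpace ℝ H]
  {G₁ : Type*} [Group G₁] [MetricSpace G₁] {H₁ : Type*} [NormedAddCommGroup H₁] [NormedSpace ℝ H₁]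

theorem WhitneyCond.map {expMap : H → G} {expMap₁ : H₁ → G₁} (π : G →* G₁)
    {C : NNReal} (hπ : LipschitzWith C π) (p : H →L[ℝ] H₁)
    (hexp : ∀ v, π (expMap v) = expMap₁ (p v))
    {f : ℝ → G} {X : ℝ → H} {K : Set ℝ} (hW : WhitneyCond G H expMap f X K) :
    WhitneyCond G₁ H₁ expMap₁ (fun t => π (f t)) (fun t => p (X t)) K := by
  obtain ⟨hX, hrem⟩ := hW
  refine ⟨p.continuous.comp_continuousOn hX, fun K' hK' hK'c => ?_⟩
  obtain ⟨ω, hω, hωle⟩ := hrem K' hK' hK'c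
  refine ⟨fun h => C * ω h, by simpa [mul_div_assoc] using hω.const_mul (C : ℝ),
    fun t ht τ hτ => ?_⟩
  calc dist (π (f t)) (π (f τ) * expMap₁ ((t - τ) • p (X τ)))
      = dist (π (f t)) (π (f τ * expMap ((t - τ) • X τ))) := by
        rw [map_mul, hexp, map_smul]
    _ ≤ C * dist (f t) (f τ * expMap ((t - τ) • X τ)) := hπ.dist_le_mul _ _
    _ ≤ C * ω |t - τ| := by gcongr; exact hωle t ht τ hτ

theorem IsC1H.prodMk {expMap : H → G} {expMap₁ : H₁ → G₁} {γ : ℝ → G} {γ' : ℝ → H}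
    {γ₁ : ℝ → G₁} {γ₁' : ℝ → H₁} {s : Set ℝ} (h : IsC1H G H expMap γ γ' s)
    (h₁ : IsC1H G₁ H₁ expMap₁ γ₁ γ₁' s) :
    IsC1H (G × G₁) (H × H₁) (fun v => (expMap v.1, expMap₁ v.2))
      (fun t => (γ t, γ₁ t)) (fun t => (γ' t, γ₁' t)) s := by
  obtain ⟨hγ, hγ', hrem⟩ := h
  obtain ⟨hγ₁, hγ₁', hrem₁⟩ := h₁
  refine ⟨hγ.prodMk hγ₁, hγ'.prodMk hγ₁', fun t ht => ?_⟩
  refine squeeze_zero (fun u => by positivity) (fun u => ?_)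
    (by simpa using (hrem t ht).add (hrem₁ t ht))
  rw [← add_div]
  gcongr
  exact max_le_add_of_nonneg dist_nonneg dist_nonneg

end

/-- **Products preserve the `C¹_H` extension property.** If `(ℝ, G₂)` and `(ℝ, G₂′)`
have the `C¹_H` extension property, then so does `(ℝ, G₂ × G₂′)`, where the product
Carnot group carries the componentwise structure and `exp(v, v') = (exp v, exp v')`. -/
theorem extensionProperty_prod
    {G : Type*} [Group G] [MetricSpace G]
    {H : Type*} [NormedAddCommGroup H] [NormedSpace ℝ H]
    {G' : Type*} [Group G'] [MetricSpace G']
    {H' : Type*} [NormedAddCommGroup H'] [NormedSpace ℝ H']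
    (expMap : H → G) (expMap' : H' → G')
    (hG : ExtensionProperty G H expMap) (hG' : ExtensionProperty G' H' expMap') :
    ExtensionProperty (G × G') (H × H') (fun v => (expMap v.1, expMap' v.2)) := by
  intro K₀ hK₀ f X hW
  obtain ⟨f₁, X₁, hC1H₁, hf₁, hX₁⟩ :=
    hG K₀ hK₀ _ _ (hW.map (MonoidHom.fst G G') LipschitzWith.prod_fst (.fst ℝ H H') fun _ => rfl)
  obtain ⟨f₂, X₂, hC1H₂, hf₂, hX₂⟩ :=
    hG' K₀ hK₀ _ _ (hW.map (MonoidHom.snd G G') LipschitzWith.prod_snd (.snd ℝ H H') fun _ => rfl)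
  exact ⟨_, _, hC1H₁.prodMk hC1H₂, fun t ht => Prod.ext (hf₁ ht) (hf₂ ht),
    fun t ht => Prod.ext (hX₁ ht) (hX₂ ht)⟩
end
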